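/- arXiv:1702.05303 — 10 statements merged into one kernel-verified Lean document; each statement's English description precedes it below -/
import Mathlib

section
/- For any three vertices x, y, z in a tree T such that xz and yz are edges of T, we have 2·ww_T(z) < ww_T(x) + ww_T(y), where ww_T(v) = Σ_{u∈V(T)} (d(u,v)² + d(u,v)). -/
open Finset
open scoped Classical

/-- Local hyper-Wiener function: `ww G v = Σ_u (d(u,v)² + d(u,v))`. -/
noncomputable def ww {V : Type*} [Fintype V] (G : SimpleGraph V) (v : V) : ℕ :=
  ∑ u : V, ((G.dist u v) ^ 2 + G.dist u v)

/-!
Fix a vertex `u` and put `d = d(u,z)`. In a tree `d(u,x), d(u,y) ∈ {d - 1, d + 1}`, and they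
cannot both be `d - 1`: the neighbour of `z` closer to `u` is the penultimate vertex of the unique
`u`–`z` path. Since `f(n) = n² + n` is strictly increasing and
`f(d + 1) + f(d - 1) = 2 f(d) + 2`, every summand of `ww x + ww y` exceeds the corresponding
summand of `2 ww z`.
-/

namespace SimpleGraph

variable {V : Type*} {G : SimpleGraph V}

lemma exists_isPath_penultimate_eq_of_dist_add_one_eq {u x z : V} (hxz : G.Adj x z)
    (h : G.dist u x + 1 = G.dist u z) :
    ∃ p : G.Walk u z, p.IsPath ∧ p.penultimate = x := by
  have hux : G.Reachable u x :=
    (Reachable.of_dist_ne_zero (by omega : G.dist u z ≠ 0)).trans hxz.symm.reachable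
  obtain ⟨p, -, hp⟩ := hux.exists_path_of_dist
  refine ⟨p.concat hxz, (p.concat hxz).isPath_of_length_eq_dist ?_, p.penultimate_concat hxz⟩
  rw [Walk.length_concat, hp, h]

lemma IsAcyclic.eq_of_adj_of_dist_add_one_eq (hG : G.IsAcyclic) {u x y z : V}
    (hxz : G.Adj x z) (hyz : G.Adj y z)
    (hx : G.dist u x + 1 = G.dist u z) (hy : G.dist u y + 1 = G.dist u z) : x = y := by
  obtain ⟨p, hp, rfl⟩ := exists_isPath_penultimate_eq_of_dist_add_one_eq hxz hx
  obtain ⟨q, hq, rfl⟩ := exists_isPath_penultimate_eq_of_dist_add_one_eq hyz hy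
  rw [Subtype.mk.inj ((hG.subsingleton_path u z).elim ⟨p, hp⟩ ⟨q, hq⟩)]

lemma IsTree.two_mul_dist_sq_add_dist_lt {x y z : V} (hG : G.IsTree) (hxy : x ≠ y)
    (hxz : G.Adj x z) (hyz : G.Adj y z) (u : V) :
    2 * (G.dist u z ^ 2 + G.dist u z) <
      (G.dist u x ^ 2 + G.dist u x) + (G.dist u y ^ 2 + G.dist u y) := by
  rcases hG.dist_eq_dist_add_one_of_adj u hxz with hx | hx <;>
    rcases hG.dist_eq_dist_add_one_of_adj u hyz with hy | hy
  · rw [hx, hy]; nlinarith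
  · rw [hx, hy]; nlinarith
  · rw [hx, hy]; nlinarith
  · exact absurd (hG.isAcyclic.eq_of_adj_of_dist_add_one_eq hxz hyz hx.symm hy.symm) hxy

end SimpleGraph

theorem stmt0 {V : Type*} [Fintype V] (T : SimpleGraph V) (hT : T.IsTree)
    (x y z : V) (hxy : x ≠ y) (hxz : T.Adj x z) (hyz : T.Adj y z) :
    2 * ww T z < ww T x + ww T y := by
  rw [ww, ww, ww, mul_sum, ← sum_add_distrib]
  exact sum_lt_sum_of_nonempty ⟨z, mem_univ z⟩ fun u _ ↦
    hT.two_mul_dist_sq_add_dist_lt hxy hxz hyz u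
end

section
/- On any path in a tree T, the set of vertices of the path attaining the minimum value of ww_T among vertices of that path consists of at most two vertices, and if there are two, they are adjacent. -/
/-!
In a tree, the distance from a fixed vertex `u` changes by exactly one along every edge, and at
an inner vertex `y` of a path `x - y - z` it can decrease towards at most one of `x`, `z`: two
distinct neighbours of `y` closer to `u` would give two different paths from `u` to `y`.
For `f d = d² + d` this yields `f (d u x) + f (d u z) ≥ 2 f (d u y) + 2`, so summing over `u`,
`ww` is strictly convex along any path. A strictly convex sequence has at most two minimisers,
and these are consecutive.
-/

open Finset
open scoped Classical

section ConvexSequence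

variable {α : Type*} [AddCommMonoid α] [LinearOrder α] [IsOrderedCancelAddMonoid α]
  {g : ℕ → α} {n : ℕ}

theorem lt_add_one_of_le_add_one_of_midpoint_lt
    (hg : ∀ k, k + 2 ≤ n → g (k + 1) + g (k + 1) < g k + g (k + 2))
    {i : ℕ} (hi : g i ≤ g (i + 1)) : ∀ k, i < k → k < n → g k < g (k + 1) := by
  intro k hik
  induction k, hik using Nat.le_induction with
  | base =>
    intro hn
    exact lt_of_add_lt_add_left ((hg i hn).trans_le (add_le_add_left hi _))
  | succ k hik ih =>
    intro hn
    have hk := ih (by omega)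
    exact lt_of_add_lt_add_left ((hg k hn).trans (add_lt_add_left hk _))

theorem eq_add_one_of_local_min_of_midpoint_lt
    (hg : ∀ k, k + 2 ≤ n → g (k + 1) + g (k + 1) < g k + g (k + 2))
    {i j : ℕ} (hij : i < j) (hjn : j ≤ n) (hi : g i ≤ g (i + 1)) (hj : g j ≤ g (j - 1)) :
    j = i + 1 := by
  by_contra hne
  have hlt := lt_add_one_of_le_add_one_of_midpoint_lt hg hi (j - 1) (by omega) (by omega)
  rw [Nat.sub_add_cancel (by omega)] at hlt
  exact hlt.not_ge hj

end ConvexSequence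

namespace SimpleGraph

variable {V : Type*} {T : SimpleGraph V}

theorem IsTree.eq_of_adj_of_dist_eq_add_one (hT : T.IsTree) {u x y z : V}
    (hxy : T.Adj x y) (hzy : T.Adj z y)
    (hx : T.dist u y = T.dist u x + 1) (hz : T.dist u y = T.dist u z + 1) : x = z := by
  have extend : ∀ w (hwy : T.Adj w y), T.dist u y = T.dist u w + 1 →
      ∃ P : T.Walk u w, (P.concat hwy).IsPath := by
    intro w hwy hw
    obtain ⟨P, hP, hPlen⟩ := hT.connected.exists_path_of_dist u w
    refine ⟨P, hP.concat (fun hy => ?_) hwy⟩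
    have := (T.dist_le (P.takeUntil y hy)).trans (P.length_takeUntil_le_length hy)
    omega
  obtain ⟨P, hP⟩ := extend x hxy hx
  obtain ⟨Q, hQ⟩ := extend z hzy hz
  obtain ⟨R, -, hR⟩ := hT.existsUnique_path u y
  exact (Walk.concat_inj ((hR _ hP).trans (hR _ hQ).symm)).1

theorem IsTree.two_mul_dist_sq_add_dist_add_two_le (hT : T.IsTree) (u : V) {x y z : V}
    (hxy : T.Adj x y) (hyz : T.Adj y z) (hxz : x ≠ z) :
    2 * (T.dist u y ^ 2 + T.dist u y) + 2 ≤
      (T.dist u x ^ 2 + T.dist u x) + (T.dist u z ^ 2 + T.dist u z) := by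
  rcases hT.dist_eq_dist_add_one_of_adj u hxy with hx | hx <;>
    rcases hT.dist_eq_dist_add_one_of_adj u hyz with hz | hz
  · rw [hx, hz]; nlinarith
  · rw [hx, hz]; nlinarith
  · exact absurd (hT.eq_of_adj_of_dist_eq_add_one hxy hyz.symm hx hz) hxz
  · rw [hx, hz]; nlinarith

theorem IsTree.two_mul_ww_lt [Fintype V] (hT : T.IsTree) {x y z : V}
    (hxy : T.Adj x y) (hyz : T.Adj y z) (hxz : x ≠ z) :
    2 * ww T y < ww T x + ww T z := by
  have hV : 0 < Fintype.card V := Fintype.card_pos_iff.mpr ⟨y⟩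
  calc 2 * ww T y < 2 * ww T y + 2 * Fintype.card V := by omega
    _ = ∑ u, (2 * (T.dist u y ^ 2 + T.dist u y) + 2) := by
      simp only [ww, sum_add_distrib, ← mul_sum, sum_const, card_univ, smul_eq_mul, mul_comm]
    _ ≤ ∑ u, ((T.dist u x ^ 2 + T.dist u x) + (T.dist u z ^ 2 + T.dist u z)) :=
      sum_le_sum fun u _ => hT.two_mul_dist_sq_add_dist_add_two_le u hxy hyz hxz
    _ = ww T x + ww T z := sum_add_distrib

theorem IsTree.ww_getVert_midpoint_lt [Fintype V] (hT : T.IsTree) {a b : V} {p : T.Walk a b}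
    (hp : p.IsPath) {k : ℕ} (hk : k + 2 ≤ p.length) :
    ww T (p.getVert (k + 1)) + ww T (p.getVert (k + 1)) <
      ww T (p.getVert k) + ww T (p.getVert (k + 2)) := by
  have hne : p.getVert k ≠ p.getVert (k + 2) := fun h => by
    have := hp.getVert_injOn (by simp only [Set.mem_ofPred_eq]; omega)
      (by simp only [Set.mem_ofPred_eq]; omega) h
    omega
  rw [← two_mul]
  exact hT.two_mul_ww_lt (p.adj_getVert_succ (by omega)) (p.adj_getVert_succ (by omega)) hne

theorem IsTree.eq_add_one_of_forall_ww_getVert_le [Fintype V] (hT : T.IsTree) {a b : V}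
    {p : T.Walk a b} (hp : p.IsPath) {i j : ℕ} (hij : i < j) (hj : j ≤ p.length)
    (hi_min : ∀ q ∈ p.support, ww T (p.getVert i) ≤ ww T q)
    (hj_min : ∀ q ∈ p.support, ww T (p.getVert j) ≤ ww T q) : j = i + 1 :=
  eq_add_one_of_local_min_of_midpoint_lt (g := fun k => ww T (p.getVert k))
    (fun _ hk => hT.ww_getVert_midpoint_lt hp hk) hij hj
    (hi_min _ (p.getVert_mem_support _)) (hj_min _ (p.getVert_mem_support _))

theorem IsTree.adj_of_forall_ww_le [Fintype V] (hT : T.IsTree) {a b : V} {p : T.Walk a b}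
    (hp : p.IsPath) {m₁ m₂ : V} (hm₁ : m₁ ∈ p.support) (hm₂ : m₂ ∈ p.support)
    (hmin₁ : ∀ q ∈ p.support, ww T m₁ ≤ ww T q) (hmin₂ : ∀ q ∈ p.support, ww T m₂ ≤ ww T q)
    (hne : m₁ ≠ m₂) : T.Adj m₁ m₂ := by
  obtain ⟨i, rfl, hi⟩ := Walk.mem_support_iff_exists_getVert.mp hm₁
  obtain ⟨j, rfl, hj⟩ := Walk.mem_support_iff_exists_getVert.mp hm₂
  rcases lt_trichotomy i j with hij | rfl | hij
  · obtain rfl := hT.eq_add_one_of_forall_ww_getVert_le hp hij hj hmin₁ hmin₂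
    exact p.adj_getVert_succ (by omega)
  · exact absurd rfl hne
  · obtain rfl := hT.eq_add_one_of_forall_ww_getVert_le hp hij hi hmin₂ hmin₁
    exact (p.adj_getVert_succ (by omega)).symm

end SimpleGraph

theorem stmt1 {V : Type*} [Fintype V] (T : SimpleGraph V) (hT : T.IsTree)
    (a b : V) (p : T.Walk a b) (hp : p.IsPath) :
    (p.support.toFinset.filter (fun m => ∀ q ∈ p.support, ww T m ≤ ww T q)).card ≤ 2 ∧
    ∀ m₁ ∈ p.support, ∀ m₂ ∈ p.support,
      (∀ q ∈ p.support, ww T m₁ ≤ ww T q) → (∀ q ∈ p.support, ww T m₂ ≤ ww T q) →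
      m₁ ≠ m₂ → T.Adj m₁ m₂ := by
  refine ⟨?_, fun m₁ hm₁ m₂ hm₂ ↦ hT.adj_of_forall_ww_le hp hm₁ hm₂⟩
  by_contra! hcard
  obtain ⟨x, hx, y, hy, z, hz, hxy, hxz, hyz⟩ := Finset.two_lt_card.mp hcard
  simp only [Finset.mem_filter, List.mem_toFinset] at hx hy hz
  refine hT.isAcyclic.cliqueFree le_rfl {x, y, z}
    (SimpleGraph.is3Clique_triple_iff.mpr ⟨?_, ?_, ?_⟩)
  · exact hT.adj_of_forall_ww_le hp hx.1 hy.1 hx.2 hy.2 hxy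
  · exact hT.adj_of_forall_ww_le hp hx.1 hz.1 hx.2 hz.2 hxz
  · exact hT.adj_of_forall_ww_le hp hy.1 hz.1 hy.2 hz.2 hyz
end

section
/- In a finite tree T, the set C_w(T) of vertices minimizing ww_T has cardinality at most 2, and if it contains two vertices then they are adjacent. Equivalently, the subgraph induced by C_w(T) is either a single vertex or a single edge. -/
open Finset
open scoped Classical

/-!
The function `t ↦ t² + t` has constant second difference `2`, and in a tree the distance
from a fixed vertex changes by exactly one along every edge and decreases along at most one
edge at each vertex. Hence along any path `a - b - c` we get
`2 ww(b) + 2|V| ≤ ww(a) + ww(c)`: `ww` is strictly convex along paths. A strictly convex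
sequence that does not decrease at its first step increases strictly afterwards, so two
minimizers lie at distance at most one, and three pairwise adjacent minimizers would
contradict strict convexity.
-/

namespace SimpleGraph

variable {V : Type*} {T : SimpleGraph V}

theorem IsTree.eq_of_adj_of_dist_lt (hT : T.IsTree) {u x y m : V} (hx : T.Adj x m)
    (hy : T.Adj y m) (hxd : T.dist u x < T.dist u m) (hyd : T.dist u y < T.dist u m) :
    x = y := by
  obtain ⟨p, hp, -⟩ := (hT.connected u m).exists_path_of_dist
  have mem_support {z : V} (hz : T.Adj z m) (hzd : T.dist u z < T.dist u m) :
      z ∈ p.support := by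
    obtain ⟨q, hq, hqd⟩ := (hT.connected u z).exists_path_of_dist
    refine hT.isAcyclic.mem_support_of_ne_mem_support_of_adj_of_isPath hp hq hz.symm
      fun hm => ?_
    have := (T.dist_le (q.takeUntil m hm)).trans (q.length_takeUntil_le_length hm)
    omega
  rw [hT.isAcyclic.eq_penultimate_of_adj_end hp hx.symm (mem_support hx hxd),
    hT.isAcyclic.eq_penultimate_of_adj_end hp hy.symm (mem_support hy hyd)]

theorem IsTree.dist_eq_dist_add_one_of_adj_of_adj (hT : T.IsTree) {a b c : V}
    (hab : T.Adj a b) (hbc : T.Adj b c) (hac : a ≠ c) (u : V) :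
    T.dist u a = T.dist u b + 1 ∨ T.dist u c = T.dist u b + 1 := by
  have := hT.dist_eq_dist_add_one_of_adj u hab
  have := hT.dist_eq_dist_add_one_of_adj u hbc
  by_contra! h
  exact hac (hT.eq_of_adj_of_dist_lt (u := u) hab hbc.symm (by omega) (by omega))

end SimpleGraph

theorem two_mul_sq_add_self_add_two_le {d s t : ℕ} (hs : d = s + 1 ∨ s = d + 1)
    (ht : d = t + 1 ∨ t = d + 1) (hst : s = d + 1 ∨ t = d + 1) :
    2 * (d ^ 2 + d) + 2 ≤ (s ^ 2 + s) + (t ^ 2 + t) := by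
  rcases hs with hs | rfl <;> rcases ht with ht | rfl
  · omega
  all_goals subst_vars; ring_nf; omega

section

open SimpleGraph

variable {V : Type*} [Fintype V] {T : SimpleGraph V}

theorem two_mul_ww_add_two_mul_card_le (hT : T.IsTree) {a b c : V} (hab : T.Adj a b) (hbc : T.Adj b c)
    (hac : a ≠ c) : 2 * ww T b + 2 * Fintype.card V ≤ ww T a + ww T c := by
  have hpoint (u : V) :
      2 * (T.dist u b ^ 2 + T.dist u b) + 2 ≤
        (T.dist u a ^ 2 + T.dist u a) + (T.dist u c ^ 2 + T.dist u c) :=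
    two_mul_sq_add_self_add_two_le (hT.dist_eq_dist_add_one_of_adj u hab.symm)
      (hT.dist_eq_dist_add_one_of_adj u hbc) (hT.dist_eq_dist_add_one_of_adj_of_adj hab hbc hac u)
  have hsum := Finset.sum_le_sum fun u (_ : u ∈ univ) => hpoint u
  rw [sum_add_distrib, sum_add_distrib, ← mul_sum, sum_const, card_univ, smul_eq_mul] at hsum
  simp only [ww]
  omega

theorem ww_add_length_le_of_isPath (hT : T.IsTree) {x y : V} (p : T.Walk x y) (hp : p.IsPath)
    {w : V} (hwx : T.Adj w x) (hwp : w ∉ p.support) (hle : ww T w ≤ ww T x) :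
    ww T x + p.length ≤ ww T y := by
  induction p generalizing w with
  | nil => simp
  | @cons x z y hxz q ih =>
    rw [Walk.cons_isPath_iff] at hp
    have hwz : w ≠ z := fun h => hwp (by simp [h])
    have hconvex := two_mul_ww_add_two_mul_card_le hT hwx hxz hwz
    have hcard : 0 < Fintype.card V := Fintype.card_pos_iff.mpr ⟨x⟩
    have := ih hp.1 hxz hp.2 (by omega)
    rw [Walk.length_cons]
    omega

theorem adj_of_forall_ww_le (hT : T.IsTree) {a b : V} (ha : ∀ u, ww T a ≤ ww T u)
    (hb : ∀ u, ww T b ≤ ww T u) (hab : a ≠ b) : T.Adj a b := by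
  obtain ⟨p, hp, -⟩ := (hT.connected a b).exists_path_of_dist
  cases p with
  | nil => exact absurd rfl hab
  | @cons _ z _ haz q =>
    rw [Walk.cons_isPath_iff] at hp
    have hclimb := ww_add_length_le_of_isPath hT q hp.1 haz hp.2 (ha z)
    have hq : q.length = 0 := by linarith [hb z]
    rwa [Walk.eq_of_length_eq_zero hq] at haz

end

theorem stmt2 {V : Type*} [Fintype V] (T : SimpleGraph V) (hT : T.IsTree) :
    (Finset.univ.filter (fun v => ∀ u, ww T v ≤ ww T u)).Nonempty ∧
    (Finset.univ.filter (fun v => ∀ u, ww T v ≤ ww T u)).card ≤ 2 ∧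
    ∀ a ∈ Finset.univ.filter (fun v => ∀ u, ww T v ≤ ww T u),
      ∀ b ∈ Finset.univ.filter (fun v => ∀ u, ww T v ≤ ww T u),
        a ≠ b → T.Adj a b := by
  have : Nonempty V := hT.connected.nonempty
  have hadj : ∀ a ∈ univ.filter (fun v => ∀ u, ww T v ≤ ww T u),
      ∀ b ∈ univ.filter (fun v => ∀ u, ww T v ≤ ww T u), a ≠ b → T.Adj a b := by
    simp only [mem_filter, mem_univ, true_and]
    exact fun a ha b hb => adj_of_forall_ww_le hT ha hb
  refine ⟨?_, ?_, hadj⟩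
  · obtain ⟨v, hv⟩ := Finite.exists_min (ww T)
    exact ⟨v, by simpa using hv⟩
  · by_contra! hcard
    obtain ⟨a, ha, b, hb, c, hc, hab, hac, hbc⟩ := two_lt_card.mp hcard
    have hconvex := two_mul_ww_add_two_mul_card_le hT (hadj a ha b hb hab) (hadj b hb c hc hbc) hac
    simp only [mem_filter, mem_univ, true_and] at ha hb hc
    have := Fintype.card_pos_iff.mpr ⟨a⟩
    linarith [ha b, hb a, hb c, hc b]
end

section
/- Let T be a tree of order n and let u, v be adjacent vertices of T. Let T_v and T_u be the connected components of T − uv containing v and u respectively. Then ww_T(v) − ww_T(u) = 2(w_{T_u}(u) − w_{T_v}(v) + |V(T_u)| − |V(T_v)|), where w_S(x) = Σ_{p∈V(S)} d_S(x,p). -/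
/-!
Deleting the edge `uv` of the tree `T` leaves the component `T_u` of `u` and `T_v` of `v`.
Paths in a forest are shortest walks, so a vertex `p` of `T_u` has `d_T(p, u) = d_{T_u}(u, p) = d`
and, prefixing the edge `vu` to that path, `d_T(p, v) = d + 1`. Such a vertex contributes
`(d + 1)² + (d + 1) - (d² + d) = 2d + 2` to `ww_T(v) - ww_T(u)`; symmetrically a vertex of `T_v`
contributes `-(2d + 2)`, and summing gives the identity.
-/

open Finset
open scoped Classical

namespace SimpleGraph

variable {V : Type*} {G T : SimpleGraph V} {u v p : V}

lemma IsAcyclic.dist_eq_length_of_isPath (hG : G.IsAcyclic) {q : G.Walk u v} (hq : q.IsPath) :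
    G.dist u v = q.length := by
  obtain ⟨r, hr, hr_len⟩ := q.reachable.exists_path_of_dist
  have : r = q := congrArg Subtype.val ((hG.subsingleton_path u v).elim ⟨r, hr⟩ ⟨q, hq⟩)
  rw [← hr_len, this]

lemma IsAcyclic.dist_eq_dist_of_le (hT : T.IsAcyclic) (hle : G ≤ T) (h : G.Reachable u v) :
    T.dist u v = G.dist u v := by
  obtain ⟨q, hq, hq_len⟩ := h.exists_path_of_dist
  rw [hT.dist_eq_length_of_isPath (hq.mapLe hle), Walk.length_mapLe, hq_len]

lemma Reachable.reachable_deleteEdges_or (h : G.Reachable u p) :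
    (G.deleteEdges {s(u, v)}).Reachable u p ∨ (G.deleteEdges {s(u, v)}).Reachable v p := by
  rw [reachable_iff_reflTransGen] at h
  induction h with
  | refl => exact Or.inl .rfl
  | @tail b c _ hbc ih =>
    by_cases hedge : s(b, c) = s(u, v)
    · rcases Sym2.mem_iff.mp (hedge ▸ Sym2.mem_mk_right b c) with rfl | rfl
      exacts [Or.inl .rfl, Or.inr .rfl]
    · have hadj : (G.deleteEdges {s(u, v)}).Adj b c := by simp [hbc, hedge]
      exact ih.imp (·.trans hadj.reachable) (·.trans hadj.reachable)

lemma IsAcyclic.not_reachable_deleteEdges (hT : T.IsAcyclic) (huv : T.Adj u v) :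
    ¬ (T.deleteEdges {s(u, v)}).Reachable u v :=
  isBridge_iff.mp (isAcyclic_iff_forall_adj_isBridge.mp hT huv)

lemma IsAcyclic.dist_of_reachable_deleteEdges (hT : T.IsAcyclic) (huv : T.Adj u v)
    (hp : (T.deleteEdges {s(u, v)}).Reachable u p) :
    T.dist u p = (T.deleteEdges {s(u, v)}).dist u p ∧
      T.dist v p = (T.deleteEdges {s(u, v)}).dist u p + 1 := by
  set G := T.deleteEdges {s(u, v)}
  have hle : G ≤ T := deleteEdges_le _
  refine ⟨hT.dist_eq_dist_of_le hle hp, ?_⟩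
  obtain ⟨q, hq, hq_len⟩ := hp.exists_path_of_dist
  have hv : v ∉ (q.mapLe hle).support := by
    rw [Walk.support_mapLe_eq_support]
    exact fun hv => hT.not_reachable_deleteEdges huv (q.takeUntil v hv).reachable
  rw [hT.dist_eq_length_of_isPath ((hq.mapLe hle).cons hv (h := huv.symm)), Walk.length_cons,
    Walk.length_mapLe, hq_len]

lemma IsTree.filter_not_reachable_deleteEdges [Fintype V] (hT : T.IsTree) (huv : T.Adj u v) :
    univ.filter (fun p => ¬ (T.deleteEdges {s(u, v)}).Reachable u p) =
      univ.filter (fun p => (T.deleteEdges {s(u, v)}).Reachable v p) := by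
  ext p
  simp only [mem_filter, mem_univ, true_and]
  refine ⟨((hT.connected u p).reachable_deleteEdges_or).resolve_left, fun hvp hup => ?_⟩
  exact hT.isAcyclic.not_reachable_deleteEdges huv (hup.trans hvp.symm)

end SimpleGraph

theorem stmt3 {V : Type*} [Fintype V] (T : SimpleGraph V) (hT : T.IsTree)
    (u v : V) (huv : T.Adj u v) :
    (ww T v : ℤ) - ww T u =
      2 * (((∑ p ∈ Finset.univ.filter
              (fun p => (T.deleteEdges {s(u,v)}).Reachable u p),
              (T.deleteEdges {s(u,v)}).dist u p : ℕ) : ℤ)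
         - ((∑ p ∈ Finset.univ.filter
              (fun p => (T.deleteEdges {s(u,v)}).Reachable v p),
              (T.deleteEdges {s(u,v)}).dist v p : ℕ) : ℤ)
         + ((Finset.univ.filter
              (fun p => (T.deleteEdges {s(u,v)}).Reachable u p)).card : ℤ)
         - ((Finset.univ.filter
              (fun p => (T.deleteEdges {s(u,v)}).Reachable v p)).card : ℤ)) := by
  set G := T.deleteEdges {s(u,v)}
  have side_u : ∀ p ∈ univ.filter (G.Reachable u ·),
      ((T.dist p v : ℤ) ^ 2 + T.dist p v) - ((T.dist p u : ℤ) ^ 2 + T.dist p u) =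
        2 * (G.dist u p : ℤ) + 2 := by
    intro p hp
    obtain ⟨hdu, hdv⟩ := hT.isAcyclic.dist_of_reachable_deleteEdges huv (mem_filter.mp hp).2
    rw [T.dist_comm, hdv, T.dist_comm, hdu]
    push_cast
    ring
  have side_v : ∀ p ∈ univ.filter (G.Reachable v ·),
      ((T.dist p v : ℤ) ^ 2 + T.dist p v) - ((T.dist p u : ℤ) ^ 2 + T.dist p u) =
        -(2 * (G.dist v p : ℤ) + 2) := by
    intro p hp
    have hp' : (T.deleteEdges {s(v, u)}).Reachable v p := by
      rw [Sym2.eq_swap]; exact (mem_filter.mp hp).2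
    obtain ⟨hdv, hdu⟩ := hT.isAcyclic.dist_of_reachable_deleteEdges huv.symm hp'
    rw [Sym2.eq_swap] at hdv hdu
    rw [T.dist_comm, hdv, T.dist_comm, hdu]
    push_cast
    ring
  calc (ww T v : ℤ) - ww T u
      = ∑ p, (((T.dist p v : ℤ) ^ 2 + T.dist p v) - ((T.dist p u : ℤ) ^ 2 + T.dist p u)) := by
        simp only [ww]; push_cast; rw [sum_sub_distrib]
    _ = ∑ p ∈ univ.filter (G.Reachable u ·), (2 * (G.dist u p : ℤ) + 2)
          + ∑ p ∈ univ.filter (G.Reachable v ·), -(2 * (G.dist v p : ℤ) + 2) := by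
        rw [← sum_filter_add_sum_filter_not univ (G.Reachable u ·),
          hT.filter_not_reachable_deleteEdges huv, sum_congr rfl side_u, sum_congr rfl side_v]
    _ = _ := by
        simp only [sum_add_distrib, sum_neg_distrib, ← mul_sum, sum_const, nsmul_eq_mul]
        push_cast
        ring
end

section
/- On any path of maximum length in a tree T, the maximum of ww_T over the vertices of the path is attained at one of the two endpoints of the path (which are leaves of T). -/
/-!
Along a path in a tree, the distance to a fixed vertex `u` first decreases and then
increases with slope one, so `t ↦ d(u, t)² + d(u, t)` is convex along the path;
summing over `u`, so is `ww`.
Concretely, for `v` on a path from `a` to `b`, with `i = d(a, v)` and `s = d(v, b)`,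
`(i + s) · ww v ≤ s · ww a + i · ww b`, hence `ww v ≤ max (ww a) (ww b)`.
-/

open Finset
open scoped Classical

namespace SimpleGraph

variable {V : Type*} {G : SimpleGraph V}

lemma Walk.dist_add_dist_of_mem_support {u v w : V} {p : G.Walk u v}
    (hp : p.length = G.dist u v) (hw : w ∈ p.support) :
    G.dist u w + G.dist w v = G.dist u v := by
  have hsplit := congrArg Walk.length (p.take_spec hw)
  rw [Walk.length_append] at hsplit
  have h₁ := dist_le (p.takeUntil w hw)
  have h₂ := dist_le (p.dropUntil w hw)
  have htri := (p.takeUntil w hw).reachable.dist_triangle_left v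
  omega

/-- In a forest the path from `a` to `b` lies in the union of the paths from `u` to `a` and
from `u` to `b`. -/
lemma IsAcyclic.dist_eq_add_or_dist_eq_add (hG : G.IsAcyclic) {a b v : V} {p : G.Walk a b}
    (hp : p.IsPath) (hv : v ∈ p.support) {u : V} (hu : G.Reachable u a) :
    G.dist u a = G.dist u v + G.dist v a ∨ G.dist u b = G.dist u v + G.dist v b := by
  obtain ⟨qa, hqa, hqa_len⟩ := hu.exists_path_of_dist
  obtain ⟨qb, hqb, hqb_len⟩ := (hu.trans p.reachable).exists_path_of_dist
  have hbypass : (qa.reverse.append qb).bypass = p :=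
    congrArg Subtype.val ((hG.subsingleton_path a b).elim ⟨_, Walk.bypass_isPath _⟩ ⟨p, hp⟩)
  have hv' := Walk.support_bypass_subset_support _ (hbypass ▸ hv)
  rw [Walk.mem_support_append_iff, Walk.support_reverse, List.mem_reverse] at hv'
  rcases hv' with hva | hvb
  · exact .inl (Walk.dist_add_dist_of_mem_support hqa_len hva).symm
  · exact .inr (Walk.dist_add_dist_of_mem_support hqb_len hvb).symm

end SimpleGraph

/-- For `s ≤ x` this is the convexity of `t ↦ t ^ 2 + t` at `x - s ≤ x ≤ x + i`. -/
lemma mul_sq_add_self_le (x B i s : ℕ) (h : x ≤ B + s) :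
    (i + s) * (x ^ 2 + x) ≤ s * ((x + i) ^ 2 + (x + i)) + i * (B ^ 2 + B) := by
  rcases le_total x s with hxs | hsx
  · nlinarith [Nat.mul_le_mul_left (i * x) hxs, Nat.mul_le_mul_left i hxs,
      Nat.zero_le (s * x * i + s * i ^ 2 + i * B ^ 2 + i * B)]
  · obtain ⟨y, rfl⟩ := Nat.exists_eq_add_of_le hsx
    have hyB : y ≤ B := by omega
    nlinarith [Nat.mul_le_mul_left i (Nat.mul_le_mul hyB hyB), Nat.mul_le_mul_left i hyB,
      Nat.zero_le (s * i * (s + i))]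

lemma mul_sq_add_self_le_of_or {x A B i s : ℕ} (hA : x ≤ A + i) (hB : x ≤ B + s)
    (hor : A = x + i ∨ B = x + s) :
    (i + s) * (x ^ 2 + x) ≤ s * (A ^ 2 + A) + i * (B ^ 2 + B) := by
  rcases hor with rfl | rfl
  · exact mul_sq_add_self_le x B i s hB
  · rw [add_comm i s, add_comm (s * _)]
    exact mul_sq_add_self_le x A s i hA

lemma SimpleGraph.IsTree.mul_ww_le {V : Type*} [Fintype V] {T : SimpleGraph V} (hT : T.IsTree)
    {a b v : V} {p : T.Walk a b} (hp : p.IsPath) (hv : v ∈ p.support) :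
    (T.dist a v + T.dist v b) * ww T v ≤ T.dist v b * ww T a + T.dist a v * ww T b := by
  simp only [ww, Finset.mul_sum, ← Finset.sum_add_distrib]
  refine Finset.sum_le_sum fun u _ => mul_sq_add_self_le_of_or ?_ ?_ ?_
  · exact (p.takeUntil v hv).reachable.dist_triangle_right u
  · rw [SimpleGraph.dist_comm (u := v)]
    exact (p.dropUntil v hv).reachable.symm.dist_triangle_right u
  · rw [SimpleGraph.dist_comm (u := a)]
    exact hT.isAcyclic.dist_eq_add_or_dist_eq_add hp hv (hT.connected u a)

theorem stmt5_general {V : Type*} [Fintype V] (T : SimpleGraph V) (hT : T.IsTree)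
    (a b : V) (p : T.Walk a b) (hp : p.IsPath) :
    ∀ v ∈ p.support, ww T v ≤ max (ww T a) (ww T b) := by
  intro v hv
  rcases eq_or_ne v a with rfl | hva
  · exact le_max_left _ _
  have hpos : 0 < T.dist a v + T.dist v b :=
    Nat.lt_add_right _ (hT.connected.pos_dist_of_ne hva.symm)
  refine le_of_mul_le_mul_left ?_ hpos
  calc _ ≤ T.dist v b * ww T a + T.dist a v * ww T b := hT.mul_ww_le hp hv
    _ ≤ T.dist v b * max (ww T a) (ww T b) + T.dist a v * max (ww T a) (ww T b) := by
      gcongr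
      exacts [le_max_left _ _, le_max_right _ _]
    _ = _ := by ring

theorem stmt5 {V : Type*} [Fintype V] (T : SimpleGraph V) (hT : T.IsTree)
    (a b : V) (p : T.Walk a b) (hp : p.IsPath)
    (hmax : ∀ (c d : V) (q : T.Walk c d), q.IsPath → q.length ≤ p.length) :
    ∀ v ∈ p.support, ww T v ≤ max (ww T a) (ww T b) :=
  stmt5_general T hT a b p hp
end

section
/- For any tree T of even order n ≥ 4 with v ∈ C_w(T) and u ∈ C(T), the minimum distance between a vertex of C_w(T) and a vertex of C(T) is at most ⌊(n² − 2n − 8)/(8n + 8)⌋. -/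
/-!
Let `v` be a hyper-centroid, `u` a centroid nearest to `v`, `d = d(v, u) ≥ 1`, and let `y`, `w` be
the neighbours of `v` and `u` on the `v`–`u` path. As `w` is closer to `v` than `u`, it is not a
centroid, so the component `B` of `u` in `T - uw` has more than `n / 2` vertices. Moving from `v`
to `y` does not decrease `ww`; since the distances to `v` within the component `A` of `v` in
`T - vy` take every value up to their maximum, this bounds `∑ 2 d(x, v)` over the other component
by `#A² + #A`. That component contains `B` and the `d - 1` inner vertices of the path, whence
`(d - 1) d + 2 d #B + 2 #B - 2 ≤ #A² + #A` with `#A + (d - 1) + #B ≤ n`. This forces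
`8 d (n + 1) + 2 n ≤ n²`, and for even `n` a divisibility argument improves `2 n` to `2 n + 8`.
-/

open Finset
open scoped Classical

/-- Local Wiener (distance) function: `w G v = Σ_u d(u,v)`. -/
noncomputable def wW {V : Type*} [Fintype V] (G : SimpleGraph V) (v : V) : ℕ :=
  ∑ u : V, G.dist u v

lemma eight_mul_add_le_sq {n d s b : ℕ} (hd : 1 ≤ d) (hcard : s + (d - 1) + b ≤ n)
    (hb : n + 2 ≤ 2 * b) (hsum : (d - 1) * d + 2 * d * b + 2 * b ≤ s * s + s + 2) :
    8 * d * (n + 1) + 2 * n ≤ n ^ 2 := by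
  obtain ⟨e, rfl⟩ : ∃ e, d = e + 1 := ⟨d - 1, by omega⟩
  simp only [Nat.add_sub_cancel] at hcard hsum
  nlinarith [Nat.mul_le_mul hcard hcard]

lemma le_div_of_eight_mul_add_le_sq {n d : ℕ} (hn : 4 ≤ n) (heven : Even n)
    (h : 8 * d * (n + 1) + 2 * n ≤ n ^ 2) : d ≤ (n ^ 2 - 2 * n - 8) / (8 * n + 8) := by
  rw [Nat.le_div_iff_mul_le (by omega)]
  suffices 8 * d * (n + 1) + 2 * n + 8 ≤ n ^ 2 by
    rw [Nat.sub_sub, Nat.le_sub_iff_add_le (by omega)]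
    linarith
  obtain ⟨m, rfl⟩ := heven
  by_contra! hlt
  -- `(n + 1) (n - 3 - 8 d) = 4 r - 3` with `n + 1 ≥ 5` rules out `r ∈ {0, 1}`
  set r : ℤ := m * m - m - 2 * d * (2 * m + 1)
  have hsq : ((m + m) ^ 2 : ℤ) = 4 * (m * m) := by ring
  have hlin : (8 * d * (m + m + 1) : ℤ) = 4 * (2 * d * (2 * m + 1)) := by ring
  have hr : r = 0 ∨ r = 1 := by
    zify at h hlt
    omega
  have hfactor : ((m : ℤ) + m + 1) * (m + m - 3 - 8 * d) = 4 * r - 3 := by ring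
  rcases lt_trichotomy ((m : ℤ) + m - 3 - 8 * d) 0 with hK | hK | hK
  · nlinarith
  · rw [hK, mul_zero] at hfactor; omega
  · nlinarith

namespace Finset

variable {ι : Type*} {s : Finset ι} {g : ι → ℕ}

lemma le_card_filter_lt_of_forall_le_exists (h : ∀ x ∈ s, ∀ j ≤ g x, ∃ y ∈ s, g y = j)
    {x : ι} (hx : x ∈ s) : g x ≤ #{y ∈ s | g y < g x} := by
  have hsub : range (g x) ⊆ {y ∈ s | g y < g x}.image g := by
    intro j hj
    obtain ⟨y, hy, rfl⟩ := h x hx j (mem_range.mp hj).le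
    exact mem_image_of_mem g (mem_filter.mpr ⟨hy, mem_range.mp hj⟩)
  simpa using (card_le_card hsub).trans card_image_le

lemma two_mul_sum_add_card_le_of_le_card_filter_lt
    (h : ∀ x ∈ s, g x ≤ #{y ∈ s | g y < g x}) :
    2 * ∑ x ∈ s, g x + #s ≤ #s * #s := by
  induction s using Finset.induction_on_max_value g with
  | empty => simp
  | insert a s ha hmax ih =>
    have hfilter : ∀ x ∈ s, #{y ∈ insert a s | g y < g x} = #{y ∈ s | g y < g x} := by
      intro x hx
      rw [filter_insert, if_neg (not_lt.mpr (hmax x hx))]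
    have hs := ih fun x hx => hfilter x hx ▸ h x (mem_insert_of_mem hx)
    have ha' : g a ≤ #s := by
      have := h a (mem_insert_self a s)
      rw [filter_insert, if_neg (lt_irrefl _)] at this
      exact this.trans (card_filter_le _ _)
    rw [sum_insert ha, card_insert_of_notMem ha]
    nlinarith

lemma two_mul_sum_add_card_le_of_forall_le_exists
    (h : ∀ x ∈ s, ∀ j ≤ g x, ∃ y ∈ s, g y = j) :
    2 * ∑ x ∈ s, g x + #s ≤ #s * #s :=
  two_mul_sum_add_card_le_of_le_card_filter_lt fun _ hx =>
    le_card_filter_lt_of_forall_le_exists h hx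

end Finset

namespace SimpleGraph

variable {V : Type*} {G : SimpleGraph V} {a b c t x z : V}

lemma Connected.dist_getVert_of_length_eq_dist (hG : G.Connected) {p : G.Walk a b}
    (hp : p.length = G.dist a b) {j : ℕ} (hj : j ≤ G.dist a b) :
    G.dist a (p.getVert j) = j ∧ G.dist (p.getVert j) b = G.dist a b - j := by
  have h₁ : G.dist a (p.getVert j) ≤ j :=
    (dist_le (p.take j)).trans (by simp [Walk.take_length])
  have h₂ : G.dist (p.getVert j) b ≤ G.dist a b - j :=
    (dist_le (p.drop j)).trans (by simp [Walk.drop_length, hp])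
  have := hG.dist_triangle (u := a) (v := p.getVert j) (w := b)
  omega

lemma IsAcyclic.length_eq_dist_of_isPath (hG : G.IsAcyclic) {p : G.Walk a b} (hp : p.IsPath) :
    p.length = G.dist a b := by
  obtain ⟨q, hq, hql⟩ := p.reachable.exists_path_of_dist
  have hpq : p = q := congrArg Subtype.val ((hG.subsingleton_path a b).elim ⟨p, hp⟩ ⟨q, hq⟩)
  rw [hpq, hql]

lemma Connected.exists_adj_dist_add_one_eq (hG : G.Connected) (hab : a ≠ b) :
    ∃ c, G.Adj a c ∧ G.dist c b + 1 = G.dist a b := by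
  obtain ⟨p, hp⟩ := hG.exists_walk_length_eq_dist a b
  have hd := hG.pos_dist_of_ne hab
  refine ⟨p.getVert 1, by simpa using p.adj_getVert_succ (i := 0) (by omega), ?_⟩
  have := (hG.dist_getVert_of_length_eq_dist hp (j := 1) hd).2
  omega

lemma Connected.card_sub_one_le_sum_dist (hG : G.Connected) (s : Finset V) (u : V) :
    #s - 1 ≤ ∑ x ∈ s, G.dist x u :=
  calc #s - 1 ≤ #(s.erase u) := pred_card_le_card_erase
    _ = ∑ _ ∈ s.erase u, 1 := card_eq_sum_ones _
    _ ≤ ∑ x ∈ s.erase u, G.dist x u := sum_le_sum fun _ hx =>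
        Nat.one_le_iff_ne_zero.mpr (hG.dist_eq_zero_iff.not.mpr (ne_of_mem_erase hx))
    _ ≤ ∑ x ∈ s, G.dist x u := sum_le_sum_of_subset (erase_subset u s)

lemma Connected.exists_finset_interior (hG : G.Connected) (a b : V) :
    ∃ Q : Finset V, #Q = G.dist a b - 1 ∧
      ∑ x ∈ Q, 2 * G.dist x a = G.dist a b * (G.dist a b - 1) ∧
      ∀ x ∈ Q, 0 < G.dist x a ∧ 0 < G.dist x b ∧ G.dist x a + G.dist x b = G.dist a b := by
  obtain ⟨p, hp⟩ := hG.exists_walk_length_eq_dist a b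
  set J := (range (G.dist a b)).erase 0
  have hdist : ∀ j ∈ J, G.dist (p.getVert j) a = j ∧
      G.dist (p.getVert j) b = G.dist a b - j := by
    intro j hj
    have := hG.dist_getVert_of_length_eq_dist hp (j := j) (by simp [J] at hj; omega)
    rwa [dist_comm] at this
  have hinj : Set.InjOn p.getVert J := fun i hi j hj hij => by
    rw [← (hdist i hi).1, ← (hdist j hj).1, hij]
  refine ⟨J.image p.getVert, ?_, ?_, ?_⟩
  · rw [card_image_of_injOn hinj]
    rcases (G.dist a b).eq_zero_or_pos with h | h
    · simp [J, h]
    · rw [card_erase_of_mem (by simpa), card_range]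
  · rw [sum_image hinj, sum_congr rfl fun j hj => by rw [(hdist j hj).1],
      sum_erase _ (mul_zero 2), ← mul_sum, mul_comm, sum_range_id_mul_two]
  · intro x hx
    obtain ⟨j, hj, rfl⟩ := mem_image.mp hx
    have := hdist j hj
    simp only [J, mem_erase, mem_range] at hj
    omega

variable [Fintype V]

/-- In a tree, `G.side a b` is the vertex set of the component of `a` in `G - ab`. -/
noncomputable def side (G : SimpleGraph V) (a b : V) : Finset V :=
  {x | G.dist x b = G.dist x a + 1}

lemma mem_side : x ∈ G.side a b ↔ G.dist x b = G.dist x a + 1 := by simp [side]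

lemma Connected.mem_side_of_mem_support (hG : G.Connected) (hab : G.Adj a b) {p : G.Walk x a}
    (hp : p.length = G.dist x a) (hx : x ∈ G.side a b) (ht : t ∈ p.support) :
    t ∈ G.side a b := by
  obtain ⟨j, rfl, hj⟩ := Walk.mem_support_iff_exists_getVert.mp ht
  have := hG.dist_getVert_of_length_eq_dist hp (hp ▸ hj)
  have := hG.dist_triangle (u := x) (v := p.getVert j) (w := b)
  have := hG.dist_triangle (u := p.getVert j) (v := a) (w := b)
  rw [dist_eq_one_iff_adj.mpr hab] at this
  rw [mem_side] at hx ⊢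
  omega

lemma Connected.exists_mem_side_dist_eq (hG : G.Connected) (hab : G.Adj a b)
    (hx : x ∈ G.side a b) {j : ℕ} (hj : j ≤ G.dist x a) :
    ∃ z ∈ G.side a b, G.dist z a = j := by
  obtain ⟨p, hp⟩ := hG.exists_walk_length_eq_dist x a
  refine ⟨p.getVert (G.dist x a - j),
    hG.mem_side_of_mem_support hab hp hx (p.getVert_mem_support _), ?_⟩
  have := (hG.dist_getVert_of_length_eq_dist hp (j := G.dist x a - j) (by omega)).2
  omega

lemma IsTree.compl_side (hT : G.IsTree) (hab : G.Adj a b) : (G.side a b)ᶜ = G.side b a := by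
  ext x
  have := hT.dist_eq_dist_add_one_of_adj x hab
  simp only [mem_compl, mem_side]
  omega

lemma IsTree.dist_eq_of_mem_side (hT : G.IsTree) (hab : G.Adj a b) (hx : x ∈ G.side a b)
    (hz : z ∈ G.side b a) : G.dist x z = G.dist x a + 1 + G.dist b z := by
  obtain ⟨p, hp⟩ := hT.connected.exists_walk_length_eq_dist x a
  obtain ⟨q, hq⟩ := hT.connected.exists_walk_length_eq_dist z b
  have hpath : (p.append (.cons hab q.reverse)).IsPath := by
    rw [Walk.isPath_def, Walk.support_append, Walk.support_cons, List.tail_cons,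
      List.nodup_append]
    refine ⟨(p.isPath_of_length_eq_dist hp).support_nodup,
      (q.isPath_of_length_eq_dist hq).reverse.support_nodup, ?_⟩
    intro s hsp s' hsq hss'
    subst hss'
    have h₁ := mem_side.mp (hT.connected.mem_side_of_mem_support hab hp hx hsp)
    have h₂ := mem_side.mp (hT.connected.mem_side_of_mem_support hab.symm hq hz
      (by simpa using hsq))
    omega
  rw [← hT.isAcyclic.length_eq_dist_of_isPath hpath, Walk.length_append, Walk.length_cons,
    Walk.length_reverse, hp, hq, dist_comm (u := z)]
  ring

lemma IsTree.dist_eq_dist_add_dist_of_mem_side (hT : G.IsTree) (hab : G.Adj a b)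
    (hc : G.dist b c + 1 = G.dist a c) (hx : x ∈ G.side a b) :
    G.dist x c = G.dist x a + G.dist a c := by
  have hcb : c ∈ G.side b a := by rw [mem_side, dist_comm, ← hc, dist_comm]
  rw [hT.dist_eq_of_mem_side hab hx hcb]
  omega

lemma IsTree.sum_dist_adj (hT : G.IsTree) (hab : G.Adj a b) (f δ : ℕ → ℕ)
    (hf : ∀ t, f (t + 1) = f t + δ t) :
    ∑ x, f (G.dist x b) + ∑ x ∈ G.side b a, δ (G.dist x b) =
      ∑ x, f (G.dist x a) + ∑ x ∈ G.side a b, δ (G.dist x a) := by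
  have key : ∀ {a b}, G.Adj a b →
      ∑ x, f (G.dist x b) + ∑ x ∈ G.side b a, δ (G.dist x b) =
      ∑ x ∈ G.side a b, (f (G.dist x a) + δ (G.dist x a)) +
        ∑ x ∈ G.side b a, (f (G.dist x b) + δ (G.dist x b)) := by
    intro a b hab
    rw [← sum_add_sum_compl (G.side a b), hT.compl_side hab, add_assoc, ← sum_add_distrib]
    congr 1
    exact sum_congr rfl fun x hx => by rw [mem_side.mp hx, hf]
  rw [key hab, key hab.symm, add_comm]

lemma IsTree.card_lt_two_mul_card_side_of_wW_lt (hT : G.IsTree) (hab : G.Adj a b)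
    (h : wW G a < wW G b) : Fintype.card V < 2 * #(G.side a b) := by
  have hsum := hT.sum_dist_adj hab id (fun _ => 1) fun _ => rfl
  have hcard := card_add_card_compl (G.side a b)
  rw [hT.compl_side hab] at hcard
  simp only [id, sum_const, smul_eq_mul, mul_one] at hsum
  unfold wW at h
  omega

lemma IsTree.sum_side_le_of_ww_le (hT : G.IsTree) (hab : G.Adj a b) (h : ww G a ≤ ww G b) :
    ∑ x ∈ G.side b a, 2 * G.dist x a ≤ ∑ x ∈ G.side a b, (2 * G.dist x a + 2) := by
  have hsum := hT.sum_dist_adj hab (fun t => t ^ 2 + t) (fun t => 2 * t + 2) fun t => by ring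
  have hfar : ∑ x ∈ G.side b a, (2 * G.dist x b + 2) = ∑ x ∈ G.side b a, 2 * G.dist x a :=
    sum_congr rfl fun x hx => by rw [mem_side.mp hx]; ring
  unfold ww at h
  omega

lemma IsTree.sum_compl_side_le_of_ww_le (hT : G.IsTree) (hab : G.Adj a b) (h : ww G a ≤ ww G b) :
    ∑ x ∈ G.side b a, 2 * G.dist x a ≤ #(G.side a b) * #(G.side a b) + #(G.side a b) := by
  have hbal := hT.sum_side_le_of_ww_le hab h
  have hcount := two_mul_sum_add_card_le_of_forall_le_exists (s := G.side a b)
    (g := (G.dist · a)) fun x hx _ hj => hT.connected.exists_mem_side_dist_eq hab hx hj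
  rw [sum_add_distrib, sum_const, smul_eq_mul, ← mul_sum (G.side a b)] at hbal
  omega

theorem IsTree.eight_mul_dist_add_le_sq (hT : G.IsTree) {v u : V}
    (hv : ∀ x, ww G v ≤ ww G x) (hu : ∀ x, wW G u ≤ wW G x)
    (hnear : ∀ u', (∀ x, wW G u' ≤ wW G x) → G.dist v u ≤ G.dist v u') (hvu : v ≠ u)
    (heven : Even (Fintype.card V)) :
    8 * G.dist v u * (Fintype.card V + 1) + 2 * Fintype.card V ≤ Fintype.card V ^ 2 := by
  have hG := hT.connected
  obtain ⟨y, hvy, hyu⟩ := hG.exists_adj_dist_add_one_eq hvu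
  obtain ⟨w, huw, hwv⟩ := hG.exists_adj_dist_add_one_eq hvu.symm
  obtain ⟨Q, hQcard, hQsum, hQ⟩ := hG.exists_finset_interior v u
  have hud : G.dist u v = G.dist v u := dist_comm
  have hvw : G.dist v w = G.dist w v := dist_comm
  set d := G.dist v u
  have hd : 1 ≤ d := Nat.one_le_iff_ne_zero.mpr (hG.dist_eq_zero_iff.not.mpr hvu)
  set A := G.side v y
  set B := G.side u w
  have hA : ∀ x ∈ A, G.dist x u = G.dist x v + d := fun _ =>
    hT.dist_eq_dist_add_dist_of_mem_side hvy hyu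
  have hB : ∀ x ∈ B, G.dist x v = G.dist x u + d := fun x hx => by
    rw [hT.dist_eq_dist_add_dist_of_mem_side huw hwv hx, hud]
  have hQB : Disjoint Q B := Finset.disjoint_left.mpr fun x hxQ hxB => by
    have := hQ x hxQ; have := hB x hxB; omega
  have hAQB : Disjoint A (Q ∪ B) := disjoint_union_right.mpr
    ⟨Finset.disjoint_left.mpr fun x hxA hxQ => by have := hQ x hxQ; have := hA x hxA; omega,
     Finset.disjoint_left.mpr fun x hxA hxB => by have := hA x hxA; have := hB x hxB; omega⟩
  have hcard : #A + #Q + #B ≤ Fintype.card V := by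
    rw [add_assoc, ← card_union_of_disjoint hQB, ← card_union_of_disjoint hAQB]
    exact card_le_univ _
  have hBcard : Fintype.card V + 2 ≤ 2 * #B := by
    have hwu : wW G u < wW G w := by
      by_contra! h
      have := hnear w fun x => h.trans (hu x)
      omega
    have : Fintype.card V < 2 * #B := hT.card_lt_two_mul_card_side_of_wW_lt huw hwu
    obtain ⟨k, hk⟩ := heven
    omega
  have hfar : ∑ x ∈ Q ∪ B, 2 * G.dist x v ≤ #A * #A + #A := by
    refine le_trans (sum_le_sum_of_subset ?_) (hT.sum_compl_side_le_of_ww_le hvy (hv y))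
    rw [← hT.compl_side hvy]
    exact subset_compl_iff_disjoint_left.mpr hAQB
  have hBsum : ∑ x ∈ B, 2 * G.dist x v = 2 * ∑ x ∈ B, G.dist x u + 2 * d * #B := by
    rw [sum_congr rfl fun x hx => by rw [hB x hx], ← mul_sum, sum_add_distrib, sum_const,
      smul_eq_mul]
    ring
  have := hG.card_sub_one_le_sum_dist B u
  rw [sum_union hQB, hQsum, hBsum] at hfar
  exact eight_mul_add_le_sq (s := #A) (b := #B) hd (by omega) hBcard
    (by rw [mul_comm (d - 1)]; omega)

end SimpleGraph

theorem stmt7 {V : Type*} [Fintype V] (T : SimpleGraph V) (hT : T.IsTree)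
    (heven : Even (Fintype.card V)) (hn : 4 ≤ Fintype.card V) :
    ∃ v u : V, (∀ x, ww T v ≤ ww T x) ∧ (∀ x, wW T u ≤ wW T x) ∧
      T.dist v u ≤ (Fintype.card V ^ 2 - 2 * Fintype.card V - 8) / (8 * Fintype.card V + 8) := by
  have hV : (univ : Finset V).Nonempty :=
    univ_nonempty_iff.mpr (Fintype.card_pos_iff.mp (by omega))
  obtain ⟨v, -, hv⟩ := exists_min_image univ (ww T) hV
  obtain ⟨u₀, -, hu₀⟩ := exists_min_image univ (wW T) hV
  obtain ⟨u, hu, hnear⟩ := exists_min_image {u | ∀ x, wW T u ≤ wW T x} (T.dist v)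
    ⟨u₀, by simpa using fun x => hu₀ x (mem_univ x)⟩
  rw [mem_filter] at hu
  refine ⟨v, u, fun x => hv x (mem_univ x), hu.2, ?_⟩
  rcases eq_or_ne v u with rfl | hvu
  · simp
  refine le_div_of_eight_mul_add_le_sq hn heven (hT.eight_mul_dist_add_le_sq
    (fun x => hv x (mem_univ x)) hu.2 (fun u' hu' => hnear u' ?_) hvu heven)
  simpa using hu'
end

section
/- Let T be a tree on n vertices with leaves u and w maximizing the ratio ww_T(w)/ww_T(u) over all trees on n vertices and pairs of leaves. Then every internal vertex on the path from u to w, except possibly the neighbor of u, has degree 2 in T. -/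
open Finset
open scoped Classical

/-!
Suppose an internal vertex `v = p.getVert i` with `2 ≤ i` had degree different from `2`. Then it
has a neighbour `x` off the path, and the branch of `T` hanging at `x` can be cut off from `v` and
reattached at the neighbour `m` of `u` on the path. Vertices on the path side keep their distances
to each other, while every vertex `z` of the branch has `d(z, u)` decreased by `d(u, v) - d(u, m)`
and `d(z, w)` increased by `d(w, m) - d(w, v) > 0`. So `u` and `w` remain leaves, `ww(u)` does
not grow and `ww(w)` strictly grows: the ratio increases, against maximality.
-/

namespace SimpleGraph

variable {V : Type*} {G H : SimpleGraph V} {a b m y z : V}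

theorem IsAcyclic.length_eq_dist (hG : G.IsAcyclic) {p : G.Walk y z} (hp : p.IsPath) :
    p.length = G.dist y z := by
  obtain ⟨q, hq, hql⟩ := p.reachable.exists_path_of_dist
  obtain rfl : p = q :=
    congrArg Subtype.val ((hG.subsingleton_path y z).elim ⟨p, hp⟩ ⟨q, hq⟩)
  exact hql

theorem IsAcyclic.dist_getVert_getVert (hG : G.IsAcyclic) {p : G.Walk y z} (hp : p.IsPath)
    {j k : ℕ} (hjk : j ≤ k) (hk : k ≤ p.length) :
    G.dist (p.getVert j) (p.getVert k) = k - j := by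
  have h := hG.length_eq_dist ((hp.drop j).take (k - j))
  rw [Walk.take_length, Walk.drop_length, Walk.drop_getVert, Nat.add_sub_cancel' hjk] at h
  omega

theorem IsAcyclic.dist_eq_dist_of_le_s8 (hG : G.IsAcyclic) (hHG : H ≤ G) (h : H.Reachable y z) :
    G.dist y z = H.dist y z := by
  obtain ⟨q, hq, hql⟩ := h.exists_path_of_dist
  rw [← hql, ← hG.length_eq_dist (hq.mapLe hHG), Walk.length_mapLe]

theorem exists_adj_ne_ne_of_degree_ne_two {v c₁ c₂ : V} [Fintype (G.neighborSet v)]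
    (h₁ : G.Adj v c₁) (h₂ : G.Adj v c₂) (hc : c₁ ≠ c₂) (hdeg : G.degree v ≠ 2) :
    ∃ x, G.Adj v x ∧ x ≠ c₁ ∧ x ≠ c₂ := by
  by_contra! h
  apply hdeg
  rw [← card_neighborFinset_eq_degree, ← card_pair hc]
  congr 1
  ext x
  rw [mem_neighborFinset, mem_insert, mem_singleton]
  exact ⟨fun hx ↦ (em (x = c₁)).imp_right (h x hx), by rintro (rfl | rfl) <;> assumption⟩

theorem IsAcyclic.exists_adj_getVert_notMem_support (hG : G.IsAcyclic) {p : G.Walk y z}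
    (hp : p.IsPath) {i : ℕ} [Fintype (G.neighborSet (p.getVert i))] (hi : 0 < i)
    (hiL : i < p.length) (hdeg : G.degree (p.getVert i) ≠ 2) :
    ∃ x, G.Adj (p.getVert i) x ∧ x ∉ p.support := by
  have hdist {j k : ℕ} (hjk : j ≤ k) (hk : k ≤ p.length) :
      G.dist (p.getVert j) (p.getVert k) = k - j := hG.dist_getVert_getVert hp hjk hk
  have hpred : G.Adj (p.getVert i) (p.getVert (i - 1)) := by
    simpa [Nat.sub_add_cancel hi] using (p.adj_getVert_succ (i := i - 1) (by omega)).symm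
  have hne : p.getVert (i - 1) ≠ p.getVert (i + 1) := fun h ↦ by
    have := hdist (j := i - 1) (k := i + 1) (by omega) hiL
    rw [h, dist_self] at this
    omega
  obtain ⟨x, hx, hx₁, hx₂⟩ :=
    exists_adj_ne_ne_of_degree_ne_two hpred (p.adj_getVert_succ hiL) hne hdeg
  refine ⟨x, hx, fun hxp ↦ ?_⟩
  obtain ⟨j, rfl, hj⟩ := Walk.mem_support_iff_exists_getVert.1 hxp
  have hone := dist_eq_one_iff_adj.2 hx
  rcases le_total i j with hij | hji
  · rw [hdist hij hj] at hone
    exact hx₂ (by rw [show j = i + 1 by omega])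
  · rw [dist_comm, hdist hji hiL.le] at hone
    exact hx₁ (by rw [show j = i - 1 by omega])

theorem Reachable.reachable_deleteEdges_or_s8 (h : G.Reachable z a) :
    (G.deleteEdges {s(a, b)}).Reachable z a ∨ (G.deleteEdges {s(a, b)}).Reachable z b := by
  obtain ⟨P, hP, -⟩ := h.exists_path_of_dist
  by_cases he : s(a, b) ∈ P.edges
  · have hb := P.snd_mem_support_of_mem_edges he
    have ha := Walk.endpoint_notMem_support_takeUntil hP hb (P.adj_of_mem_edges he).ne
    exact .inr (reachable_deleteEdges_iff_exists_walk.2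
      ⟨P.takeUntil b hb, fun h ↦ ha ((P.takeUntil b hb).fst_mem_support_of_mem_edges h)⟩)
  · exact .inl (reachable_deleteEdges_iff_exists_walk.2 ⟨P, he⟩)

theorem Walk.reachable_deleteEdges_of_notMem_support (p : G.Walk y z) (hb : b ∉ p.support)
    {t t' : V} (ht : t ∈ p.support) (ht' : t' ∈ p.support) :
    (G.deleteEdges {s(a, b)}).Reachable t t' :=
  have hstart {t : V} (ht : t ∈ p.support) : (G.deleteEdges {s(a, b)}).Reachable y t :=
    reachable_deleteEdges_iff_exists_walk.2 ⟨p.takeUntil t ht,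
      fun he ↦ hb (p.snd_mem_support_of_mem_edges (p.edges_takeUntil_subset_edges ht he))⟩
  (hstart ht).symm.trans (hstart ht')

theorem IsAcyclic.not_reachable_deleteEdges_s8 (hG : G.IsAcyclic) (hab : G.Adj a b) :
    ¬ (G.deleteEdges {s(a, b)}).Reachable a b :=
  isBridge_iff.mp (isAcyclic_iff_forall_adj_isBridge.mp hG hab)

theorem IsAcyclic.dist_eq_dist_add_one_add_dist (hG : G.IsAcyclic) (hab : G.Adj a b)
    (hy : (G.deleteEdges {s(a, b)}).Reachable y a) (hz : (G.deleteEdges {s(a, b)}).Reachable b z) :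
    G.dist y z = G.dist y a + 1 + G.dist b z := by
  have hD : G.deleteEdges {s(a, b)} ≤ G := deleteEdges_le _
  obtain ⟨q₁, hq₁, -⟩ := hy.exists_path_of_dist
  obtain ⟨q₂, hq₂, -⟩ := hz.exists_path_of_dist
  have hpath : ((q₁.mapLe hD).append (.cons hab (q₂.mapLe hD))).IsPath := by
    rw [Walk.isPath_def, Walk.support_append, Walk.support_cons, List.tail_cons,
      Walk.support_mapLe_eq_support, Walk.support_mapLe_eq_support]
    refine List.nodup_append.2 ⟨hq₁.support_nodup, hq₂.support_nodup, ?_⟩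
    rintro t ht₁ _ ht₂ rfl
    exact hG.not_reachable_deleteEdges_s8 hab
      ((q₁.dropUntil t ht₁).reachable.symm.trans (q₂.takeUntil t ht₂).reachable.symm)
  rw [← hG.length_eq_dist hpath, ← hG.length_eq_dist (hq₁.mapLe hD),
    ← hG.length_eq_dist (hq₂.mapLe hD)]
  simp only [Walk.length_append, Walk.length_cons, Walk.length_mapLe]
  omega

/-- Subtree prune and regraft: the branch hanging at `b` is moved from `a` to `m`. -/
def regraft (G : SimpleGraph V) (a b m : V) : SimpleGraph V :=
  G.deleteEdges {s(a, b)} ⊔ edge m b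

theorem neighborSet_regraft {t : V} (hta : t ≠ a) (htb : t ≠ b) (htm : t ≠ m) :
    (G.regraft a b m).neighborSet t = G.neighborSet t := by
  ext z
  simp [regraft, edge_adj, hta, htb, htm]

theorem degree_regraft {t : V} (hta : t ≠ a) (htb : t ≠ b) (htm : t ≠ m)
    [Fintype (G.neighborSet t)] [Fintype ((G.regraft a b m).neighborSet t)] :
    (G.regraft a b m).degree t = G.degree t := by
  simp_rw [← card_neighborSet_eq_degree]
  exact Fintype.card_congr (.setCongr (neighborSet_regraft hta htb htm))

theorem deleteEdges_regraft (h : ¬ (G.deleteEdges {s(a, b)}).Adj m b) :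
    (G.regraft a b m).deleteEdges {s(m, b)} = G.deleteEdges {s(a, b)} := by
  rw [regraft, deleteEdges_sup, deleteEdges_eq_self.2, edge, deleteEdges_fromEdgeSet, sdiff_self]
  · simp
  · simpa [Set.disjoint_singleton_right] using h

theorem IsAcyclic.isAcyclic_regraft (hG : G.IsAcyclic) (hab : G.Adj a b)
    (hm : (G.deleteEdges {s(a, b)}).Reachable a m) : (G.regraft a b m).IsAcyclic :=
  (hG.anti (deleteEdges_le _)).sup_edge_of_not_reachable
    fun h ↦ hG.not_reachable_deleteEdges_s8 hab (hm.trans h)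

theorem IsAcyclic.regraft_adj (hG : G.IsAcyclic) (hab : G.Adj a b)
    (hm : (G.deleteEdges {s(a, b)}).Reachable a m) : (G.regraft a b m).Adj m b := by
  refine Or.inr ((edge_adj ..).2 ⟨.inl ⟨rfl, rfl⟩, ?_⟩)
  rintro rfl
  exact hG.not_reachable_deleteEdges_s8 hab hm

theorem IsTree.regraft (hG : G.IsTree) (hab : G.Adj a b)
    (hm : (G.deleteEdges {s(a, b)}).Reachable a m) : (G.regraft a b m).IsTree := by
  have hle : G.deleteEdges {s(a, b)} ≤ G.regraft a b m := le_sup_left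
  refine ⟨(connected_iff_exists_forall_reachable _).2 ⟨a, fun z ↦ ?_⟩,
    hG.isAcyclic.isAcyclic_regraft hab hm⟩
  rcases (hG.connected z a).reachable_deleteEdges_or_s8 with hz | hz
  · exact hz.symm.mono hle
  · exact (hm.mono hle).trans
      ((hG.isAcyclic.regraft_adj hab hm).reachable.trans (hz.symm.mono hle))

theorem IsAcyclic.dist_regraft_of_reachable (hG : G.IsAcyclic) (hab : G.Adj a b)
    (hm : (G.deleteEdges {s(a, b)}).Reachable a m) (h : (G.deleteEdges {s(a, b)}).Reachable y z) :
    (G.regraft a b m).dist y z = G.dist y z := by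
  rw [(hG.isAcyclic_regraft hab hm).dist_eq_dist_of_le_s8 le_sup_left h,
    hG.dist_eq_dist_of_le_s8 (deleteEdges_le _) h]

theorem IsAcyclic.dist_regraft_eq_dist_add_one_add_dist (hG : G.IsAcyclic) (hab : G.Adj a b)
    (hm : (G.deleteEdges {s(a, b)}).Reachable a m) (hy : (G.deleteEdges {s(a, b)}).Reachable y a)
    (hz : (G.deleteEdges {s(a, b)}).Reachable b z) :
    (G.regraft a b m).dist y z = G.dist y m + 1 + G.dist b z := by
  have hD := deleteEdges_regraft (m := m)
    fun h ↦ hG.not_reachable_deleteEdges_s8 hab (hm.trans h.reachable)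
  rw [(hG.isAcyclic_regraft hab hm).dist_eq_dist_add_one_add_dist (hG.regraft_adj hab hm)
    (by rw [hD]; exact hy.trans hm) (by rw [hD]; exact hz),
    hG.dist_regraft_of_reachable hab hm (hy.trans hm), hG.dist_regraft_of_reachable hab hm hz]

theorem IsTree.dist_regraft_eq_or (hG : G.IsTree) (hab : G.Adj a b)
    (hm : (G.deleteEdges {s(a, b)}).Reachable a m) (hy : (G.deleteEdges {s(a, b)}).Reachable y a)
    (z : V) : (G.regraft a b m).dist y z = G.dist y z ∨
      (G.regraft a b m).dist y z + G.dist y a = G.dist y z + G.dist y m := by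
  rcases (hG.connected z a).reachable_deleteEdges_or_s8 with hz | hz
  · exact .inl (hG.isAcyclic.dist_regraft_of_reachable hab hm (hy.trans hz.symm))
  · rw [hG.isAcyclic.dist_regraft_eq_dist_add_one_add_dist hab hm hy hz.symm,
      hG.isAcyclic.dist_eq_dist_add_one_add_dist hab hy hz.symm]
    omega

section ww

variable [Fintype V]

theorem ww_le_ww (h : ∀ z, G.dist z y ≤ H.dist z y) : ww G y ≤ ww H y :=
  sum_le_sum fun z _ ↦ add_le_add (Nat.pow_le_pow_left (h z) 2) (h z)

theorem ww_lt_ww (h : ∀ z, G.dist z y ≤ H.dist z y) (hz : G.dist z y < H.dist z y) :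
    ww G y < ww H y :=
  sum_lt_sum (fun z _ ↦ add_le_add (Nat.pow_le_pow_left (h z) 2) (h z))
    ⟨z, mem_univ z, add_lt_add_of_le_of_lt (Nat.pow_le_pow_left hz.le 2) hz⟩

theorem ww_pos_of_ne (hG : G.Connected) (h : z ≠ y) : 0 < ww G y :=
  (single_le_sum (f := fun z ↦ G.dist z y ^ 2 + G.dist z y) (fun _ _ ↦ Nat.zero_le _)
    (mem_univ z)).trans_lt' (by have := hG.pos_dist_of_ne h; positivity)

theorem IsTree.ww_regraft_le (hG : G.IsTree) (hab : G.Adj a b)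
    (hm : (G.deleteEdges {s(a, b)}).Reachable a m) (hy : (G.deleteEdges {s(a, b)}).Reachable a y)
    (h : G.dist y m ≤ G.dist y a) : ww (G.regraft a b m) y ≤ ww G y :=
  ww_le_ww fun z ↦ by
    rw [dist_comm, dist_comm (v := y)]
    have := hG.dist_regraft_eq_or hab hm hy.symm z
    omega

theorem IsTree.ww_lt_ww_regraft (hG : G.IsTree) (hab : G.Adj a b)
    (hm : (G.deleteEdges {s(a, b)}).Reachable a m) (hy : (G.deleteEdges {s(a, b)}).Reachable a y)
    (h : G.dist y a < G.dist y m) : ww G y < ww (G.regraft a b m) y := by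
  refine ww_lt_ww (z := b) (fun z ↦ ?_) ?_ <;> rw [dist_comm, dist_comm (v := y)]
  · have := hG.dist_regraft_eq_or hab hm hy.symm z
    omega
  · have := hG.isAcyclic.dist_eq_dist_add_one_add_dist hab hy.symm .rfl
    have := hG.isAcyclic.dist_regraft_eq_dist_add_one_add_dist hab hm hy.symm .rfl
    omega

theorem IsTree.ww_div_ww_lt_regraft (hG : G.IsTree) (hab : G.Adj a b)
    (hm : (G.deleteEdges {s(a, b)}).Reachable a m) (hy : (G.deleteEdges {s(a, b)}).Reachable a y)
    (hz : (G.deleteEdges {s(a, b)}).Reachable a z) (hym : G.dist y m ≤ G.dist y a)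
    (hza : G.dist z a < G.dist z m) :
    (ww G z : ℚ) / ww G y < ww (G.regraft a b m) z / ww (G.regraft a b m) y := by
  have : Nontrivial V := ⟨⟨a, b, hab.ne⟩⟩
  obtain ⟨t, ht⟩ := exists_ne y
  exact div_lt_div₀ (by exact_mod_cast hG.ww_lt_ww_regraft hab hm hz hza)
    (by exact_mod_cast hG.ww_regraft_le hab hm hy hym) (by positivity)
    (by exact_mod_cast ww_pos_of_ne (hG.regraft hab hm).connected ht)

theorem IsTree.ww_div_ww_lt_regraft_getVert (hG : G.IsTree) {u w x : V} {p : G.Walk u w}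
    (hp : p.IsPath) {i : ℕ} (hi : 2 ≤ i) (hiL : i < p.length) (hx : G.Adj (p.getVert i) x)
    (hxp : x ∉ p.support) :
    (ww G w : ℚ) / ww G u < ww (G.regraft (p.getVert i) x (p.getVert 1)) w /
      ww (G.regraft (p.getVert i) x (p.getVert 1)) u := by
  have hside {t : V} (ht : t ∈ p.support) :
      (G.deleteEdges {s(p.getVert i, x)}).Reachable (p.getVert i) t :=
    p.reachable_deleteEdges_of_notMem_support hxp (p.getVert_mem_support i) ht
  have hdist {j k : ℕ} (hjk : j ≤ k) (hk : k ≤ p.length) :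
      G.dist (p.getVert j) (p.getVert k) = k - j := hG.isAcyclic.dist_getVert_getVert hp hjk hk
  refine hG.ww_div_ww_lt_regraft hx (hside (p.getVert_mem_support 1)) (hside p.start_mem_support)
    (hside p.end_mem_support) ?_ ?_
  · have hm := hdist (Nat.zero_le 1) (by omega)
    have hv := hdist (Nat.zero_le i) (by omega)
    simp only [Walk.getVert_zero] at hm hv
    omega
  · have hm := hdist (by omega : 1 ≤ p.length) le_rfl
    have hv := hdist (by omega : i ≤ p.length) le_rfl
    simp only [Walk.getVert_length, SimpleGraph.dist_comm (u := w)] at hm hv ⊢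
    omega

end ww

end SimpleGraph

open SimpleGraph

theorem stmt8 {V : Type*} [Fintype V] (T : SimpleGraph V) (hT : T.IsTree)
    (u w : V) (hu : T.degree u = 1) (hw : T.degree w = 1)
    (hmax : ∀ (T' : SimpleGraph V), T'.IsTree → ∀ u' w' : V,
      T'.degree u' = 1 → T'.degree w' = 1 →
      (ww T' w' : ℚ) / (ww T' u') ≤ (ww T w : ℚ) / (ww T u))
    (p : T.Walk u w) (hp : p.IsPath) :
    ∀ i, 2 ≤ i → i ≤ p.length - 1 → T.degree (p.getVert i) = 2 := by
  intro i hi hiL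
  by_contra hdeg
  obtain ⟨x, hvx, hx⟩ :=
    hT.isAcyclic.exists_adj_getVert_notMem_support hp (i := i) (by omega) (by omega) hdeg
  have hu_ne {j : ℕ} (hj : j ≠ 0) (hjL : j ≤ p.length) : u ≠ p.getVert j :=
    Ne.symm ((hp.getVert_eq_start_iff hjL).not.2 hj)
  have hw_ne {j : ℕ} (hj : j < p.length) : w ≠ p.getVert j :=
    Ne.symm ((hp.getVert_eq_end_iff hj.le).not.2 hj.ne)
  have hT' := hT.regraft hvx <|
    p.reachable_deleteEdges_of_notMem_support hx (p.getVert_mem_support i) (p.getVert_mem_support 1)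
  refine (hmax _ hT' u w ?_ ?_).not_gt
    (hT.ww_div_ww_lt_regraft_getVert hp hi (by omega) hvx hx)
  · rw [degree_regraft (hu_ne (j := i) (by omega) (by omega))
      (ne_of_mem_of_not_mem p.start_mem_support hx) (hu_ne one_ne_zero (by omega)), hu]
  · rw [degree_regraft (hw_ne (j := i) (by omega)) (ne_of_mem_of_not_mem p.end_mem_support hx)
      (hw_ne (j := 1) (by omega)), hw]
end

section
/- Let T be a tree of order n ≥ 3 with vertex v of degree k, neighbors v₁, …, v_k, and components T₁, …, T_k of T − v containing v₁, …, v_k respectively. Then ww_T(v) = 2(n−1) + 2·Σ_{i=1}^{k} w_{T_i}(v_i) + Σ_{i=1}^{k} ww_{T_i}(v_i). -/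
open Finset
open scoped Classical

/-!
Removing `v` from the tree `T` (modelled as deleting the edges at `v`, which leaves `v` isolated)
leaves one component `T_i` for each neighbour `v_i`; every vertex
`u ≠ v` lies in exactly one of them, and the `v`–`u` path of `T` is the edge `v v_i` followed by
the `v_i`–`u` path of `T_i`, so `d_T(v, u) = d_{T_i}(v_i, u) + 1`. Summing
`(d + 1)² + (d + 1) = (d² + d) + 2 d + 2` over the `n - 1` vertices `u ≠ v` gives the identity.
-/

namespace SimpleGraph

variable {V : Type*} {G : SimpleGraph V} {v u w w' : V}

lemma eq_of_reachable_deleteEdges_incidenceSet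
    (h : (G.deleteEdges (G.incidenceSet v)).Reachable u v) : u = v := by
  obtain ⟨p⟩ := h.symm
  cases p with
  | nil => rfl
  | cons h _ => exact ((deleteIncidenceSet_adj.mp h).2.1 rfl).elim

lemma Walk.notMem_support_of_deleteEdges_incidenceSet {a : V}
    (p : (G.deleteEdges (G.incidenceSet v)).Walk a u) (ha : a ≠ v) : v ∉ p.support := fun hv =>
  ha (eq_of_reachable_deleteEdges_incidenceSet (p.takeUntil v hv).reachable)

lemma Walk.reachable_deleteEdges_incidenceSet {a : V} (p : G.Walk a u) (hv : v ∉ p.support) :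
    (G.deleteEdges (G.incidenceSet v)).Reachable a u :=
  ⟨p.toDeleteEdges _ fun _ he hmem => hv (Walk.mem_support_of_mem_edges he hmem.2)⟩

lemma Connected.exists_adj_reachable_deleteEdges_incidenceSet (hG : G.Connected) (hu : u ≠ v) :
    ∃ w, G.Adj v w ∧ (G.deleteEdges (G.incidenceSet v)).Reachable w u := by
  obtain ⟨p, hp⟩ := (hG v u).exists_isPath
  cases p with
  | nil => exact absurd rfl hu
  | @cons _ b _ h q =>
    exact ⟨b, h, q.reachable_deleteEdges_incidenceSet ((Walk.cons_isPath_iff h q).mp hp).2⟩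

lemma IsAcyclic.eq_of_adj_of_reachable_deleteEdges_incidenceSet (hG : G.IsAcyclic)
    (hw : G.Adj v w) (hw' : G.Adj v w')
    (h : (G.deleteEdges (G.incidenceSet v)).Reachable w w') : w = w' := by
  by_contra hne
  obtain ⟨r⟩ := h
  let avoiding : G.Path w w' :=
    ⟨r.bypass.mapLe (deleteEdges_le _), r.bypass_isPath.mapLe _⟩
  let through : G.Path w w' :=
    ⟨.cons hw.symm (.cons hw' .nil), by simp [Walk.isPath_def, hw.ne', hw'.ne, hne]⟩
  have hv : v ∉ (avoiding : G.Walk w w').support := by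
    simpa [avoiding, Walk.support_mapLe_eq_support] using
      r.bypass.notMem_support_of_deleteEdges_incidenceSet hw.ne'
  rw [(hG.subsingleton_path w w').elim avoiding through] at hv
  simp [through] at hv

lemma IsTree.dist_eq_dist_deleteEdges_incidenceSet_add_one (hG : G.IsTree) (hw : G.Adj v w)
    (hr : (G.deleteEdges (G.incidenceSet v)).Reachable w u) :
    G.dist v u = (G.deleteEdges (G.incidenceSet v)).dist w u + 1 := by
  have hu : u ≠ v := by
    rintro rfl
    exact hw.ne' (eq_of_reachable_deleteEdges_incidenceSet hr)
  apply le_antisymm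
  · obtain ⟨r, hrlen⟩ := hr.exists_walk_length_eq_dist
    simpa [hrlen, Nat.add_comm] using dist_le (.cons hw (r.mapLe (deleteEdges_le _)))
  · obtain ⟨p, hp, hlen⟩ := (hG.connected v u).exists_path_of_dist
    cases p with
    | nil => exact absurd rfl hu
    | @cons _ b _ h q =>
      have hq := ((Walk.cons_isPath_iff h q).mp hp).2
      have hb : b = w := hG.isAcyclic.eq_of_adj_of_reachable_deleteEdges_incidenceSet h hw
        ((q.reachable_deleteEdges_incidenceSet hq).trans hr.symm)
      subst hb
      have hle := dist_le (q.toDeleteEdges (G.incidenceSet v)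
        fun _ he hmem => hq (Walk.mem_support_of_mem_edges he hmem.2))
      rw [Walk.length_transfer] at hle
      rw [← hlen, Walk.length_cons]
      omega

lemma IsTree.sum_erase_eq_sum_neighborFinset_sum [Fintype V] {M : Type*} [AddCommMonoid M]
    (hG : G.IsTree) (v : V) (f : V → M) :
    ∑ u ∈ univ.erase v, f u = ∑ w ∈ G.neighborFinset v,
      ∑ u ∈ univ.filter (fun u => (G.deleteEdges (G.incidenceSet v)).Reachable w u), f u := by
  have hdisj : (G.neighborFinset v : Set V).PairwiseDisjoint
      fun w => univ.filter fun u => (G.deleteEdges (G.incidenceSet v)).Reachable w u := by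
    intro w hw w' hw' hne
    refine Finset.disjoint_left.mpr fun u hu hu' => hne ?_
    simp only [coe_neighborFinset, mem_neighborSet, mem_filter, mem_univ, true_and]
      at hw hw' hu hu'
    exact hG.isAcyclic.eq_of_adj_of_reachable_deleteEdges_incidenceSet hw hw' (hu.trans hu'.symm)
  rw [← sum_biUnion hdisj]
  congr 1
  ext u
  simp only [mem_erase, mem_univ, and_true, mem_biUnion, mem_neighborFinset, mem_filter,
    true_and]
  constructor
  · exact hG.connected.exists_adj_reachable_deleteEdges_incidenceSet
  · rintro ⟨w, hw, hr⟩ rfl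
    exact hw.ne' (eq_of_reachable_deleteEdges_incidenceSet hr)

end SimpleGraph

open SimpleGraph

theorem stmt12_general {V : Type*} [Fintype V] (T : SimpleGraph V) (hT : T.IsTree) (v : V) :
    ww T v = 2 * (Fintype.card V - 1)
      + 2 * ∑ vi ∈ T.neighborFinset v,
          ∑ q ∈ Finset.univ.filter
              (fun q => (T.deleteEdges (T.incidenceSet v)).Reachable vi q),
            (T.deleteEdges (T.incidenceSet v)).dist vi q
      + ∑ vi ∈ T.neighborFinset v,
          ∑ q ∈ Finset.univ.filter
              (fun q => (T.deleteEdges (T.incidenceSet v)).Reachable vi q),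
            ((T.deleteEdges (T.incidenceSet v)).dist vi q ^ 2
              + (T.deleteEdges (T.incidenceSet v)).dist vi q) := by
  have hww : ww T v = ∑ u ∈ univ.erase v, (T.dist u v ^ 2 + T.dist u v) :=
    (sum_erase _ (by simp)).symm
  have hcard : Fintype.card V - 1 = ∑ u ∈ univ.erase v, 1 := by simp [card_erase_of_mem]
  rw [hww, hcard, hT.sum_erase_eq_sum_neighborFinset_sum, hT.sum_erase_eq_sum_neighborFinset_sum,
    mul_sum, mul_sum, ← sum_add_distrib, ← sum_add_distrib]
  refine sum_congr rfl fun w hw => ?_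
  rw [mul_sum, mul_sum, ← sum_add_distrib, ← sum_add_distrib]
  refine sum_congr rfl fun u hu => ?_
  rw [dist_comm, hT.dist_eq_dist_deleteEdges_incidenceSet_add_one
    ((mem_neighborFinset _ _ _).mp hw) (mem_filter.mp hu).2]
  ring

theorem stmt12 {V : Type*} [Fintype V] (T : SimpleGraph V) (hT : T.IsTree)
    (hn : 3 ≤ Fintype.card V) (v : V) :
    ww T v = 2 * (Fintype.card V - 1)
      + 2 * ∑ vi ∈ T.neighborFinset v,
          ∑ q ∈ Finset.univ.filter
              (fun q => (T.deleteEdges (T.incidenceSet v)).Reachable vi q),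
            (T.deleteEdges (T.incidenceSet v)).dist vi q
      + ∑ vi ∈ T.neighborFinset v,
          ∑ q ∈ Finset.univ.filter
              (fun q => (T.deleteEdges (T.incidenceSet v)).Reachable vi q),
            ((T.deleteEdges (T.incidenceSet v)).dist vi q ^ 2
              + (T.deleteEdges (T.incidenceSet v)).dist vi q) :=
  stmt12_general T hT v
end

section
/- Let T be a tree with adjacent vertices u, v and components T_u, T_v of T − uv containing u, v. Then ww_T(x) + ww_T(y) − 2·ww_T(z) = 2(|V(T_x)| + |V(T_y)| + 2·Σ_{p∈V(T_z)}(d(z,p)+1)) when x, z, y are consecutive vertices on a path (xz, yz ∈ E(T)) and T_x, T_y, T_z are the components of T − {xz, yz} containing x, y, z respectively. -/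
open Finset
open scoped Classical

/-!
Write `f d = d² + d`, so the summand of `ww T x + ww T y - 2 ww T z` at a vertex `p` is
`f (d(p,x)) + f (d(p,y)) - 2 f (d(p,z))`. Since `xz` and `yz` are bridges, crossing one of them
changes the distance to `p` by exactly one, in a direction determined by the side `p` lies on.
Hence on `T_x` and `T_y` the summand is the second difference of `f`, which is `2`, and on `T_z`
it is `2 (f (d + 1) - f d) = 4 (d + 1)` with `d = d(z,p)`.
-/

namespace SimpleGraph

variable {V : Type*} {G : SimpleGraph V}

theorem Reachable.reachable_deleteEdges_or_exists {s : Set (Sym2 V)} {u v : V}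
    (h : G.Reachable u v) :
    (G.deleteEdges s).Reachable u v ∨
      ∃ e ∈ s, ∃ w ∈ e, (G.deleteEdges s).Reachable u w := by
  obtain ⟨W⟩ := h
  by_cases hv : (G.deleteEdges s).Reachable u v
  · exact .inl hv
  obtain ⟨d, -, hd, hd'⟩ :=
    W.exists_boundary_dart {w | (G.deleteEdges s).Reachable u w} (Reachable.refl u) hv
  have hs : d.edge ∈ s := by
    by_contra hs
    exact hd' (hd.trans (deleteEdges_adj.mpr ⟨d.adj, hs⟩).reachable)
  exact .inr ⟨d.edge, hs, d.fst, Sym2.mem_mk_left _ _, hd⟩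

theorem IsAcyclic.dist_eq_dist_add_one_of_reachable_deleteEdges (hG : G.IsAcyclic) {u v p : V}
    (huv : G.Adj u v) (hp : (G.deleteEdges {s(u, v)}).Reachable u p) :
    G.dist p v = G.dist p u + 1 := by
  have hpu : G.Reachable p u := (hp.mono (deleteEdges_le _)).symm
  obtain ⟨W, hW⟩ := (hpu.trans huv.reachable).exists_walk_length_eq_dist
  -- a shortest walk from `p` to `v` must cross the bridge `uv`, hence pass through `u`
  have he : s(u, v) ∈ W.edges := by
    by_contra he
    exact isBridge_iff.mp (isAcyclic_iff_forall_adj_isBridge.mp hG huv)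
      (hp.trans (reachable_deleteEdges_iff_exists_walk.mpr ⟨W, he⟩))
  have hu := W.fst_mem_support_of_mem_edges he
  have hsplit := congrArg Walk.length (W.take_spec hu)
  rw [Walk.length_append] at hsplit
  have htake := dist_le (W.takeUntil u hu)
  have hdrop := dist_le (W.dropUntil u hu)
  rw [dist_eq_one_iff_adj.mpr huv] at hdrop
  have := hpu.dist_triangle_left v
  rw [dist_eq_one_iff_adj.mpr huv] at this
  omega

section ThreeComponents

variable {T : SimpleGraph V} {x y z p : V}

theorem IsTree.reachable_deleteEdges_pair (hT : T.IsTree) (x y z p : V) :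
    (T.deleteEdges {s(x, z), s(y, z)}).Reachable x p ∨
      (T.deleteEdges {s(x, z), s(y, z)}).Reachable y p ∨
      (T.deleteEdges {s(x, z), s(y, z)}).Reachable z p := by
  rcases (hT.connected p z).reachable_deleteEdges_or_exists with h | ⟨e, he, w, hw, h⟩
  · exact .inr (.inr h.symm)
  · simp only [Set.mem_insert_iff, Set.mem_singleton_iff] at he
    rcases he with rfl | rfl <;> rcases Sym2.mem_iff.mp hw with rfl | rfl <;> simp [h.symm]

theorem IsAcyclic.dist_eq_dist_add_one_of_reachable_center (hT : T.IsAcyclic) (hxz : T.Adj x z)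
    (hp : (T.deleteEdges {s(x, z), s(y, z)}).Reachable z p) :
    T.dist p x = T.dist p z + 1 :=
  hT.dist_eq_dist_add_one_of_reachable_deleteEdges hxz.symm
    (hp.mono (deleteEdges_anti (by simp [Sym2.eq_swap])))

theorem IsAcyclic.dist_eq_dist_add_one_of_reachable_leaf (hT : T.IsAcyclic) (hxy : x ≠ y)
    (hxz : T.Adj x z) (hyz : T.Adj y z)
    (hp : (T.deleteEdges {s(x, z), s(y, z)}).Reachable x p) :
    T.dist p z = T.dist p x + 1 ∧ T.dist p y = T.dist p z + 1 := by
  refine ⟨hT.dist_eq_dist_add_one_of_reachable_deleteEdges hxz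
    (hp.mono (deleteEdges_anti (by simp))), ?_⟩
  have hzx : (T.deleteEdges {s(z, y)}).Adj z x := by
    simp [hxz.symm, hxz.ne, hxy, Sym2.eq_swap]
  exact hT.dist_eq_dist_add_one_of_reachable_deleteEdges hyz.symm
    (hzx.reachable.trans (hp.mono (deleteEdges_anti (by simp [Sym2.eq_swap]))))

theorem IsTree.second_difference_dist_sq_add_dist (hT : T.IsTree) (hxy : x ≠ y)
    (hxz : T.Adj x z) (hyz : T.Adj y z) (p : V) :
    ((T.dist p x : ℤ) ^ 2 + T.dist p x) + ((T.dist p y : ℤ) ^ 2 + T.dist p y)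
        - 2 * ((T.dist p z : ℤ) ^ 2 + T.dist p z) =
      (if (T.deleteEdges {s(x, z), s(y, z)}).Reachable x p then 2 else 0)
        + (if (T.deleteEdges {s(x, z), s(y, z)}).Reachable y p then 2 else 0)
        + (if (T.deleteEdges {s(x, z), s(y, z)}).Reachable z p
            then 4 * ((T.dist z p : ℤ) + 1) else 0) := by
  have hX := hT.isAcyclic.dist_eq_dist_add_one_of_reachable_leaf (p := p) hxy hxz hyz
  have hY := hT.isAcyclic.dist_eq_dist_add_one_of_reachable_leaf (p := p) hxy.symm hyz hxz
  have hZx := hT.isAcyclic.dist_eq_dist_add_one_of_reachable_center (p := p) (y := y) hxz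
  have hZy := hT.isAcyclic.dist_eq_dist_add_one_of_reachable_center (p := p) (y := x) hyz
  rw [Set.pair_comm] at hY hZy
  rw [dist_comm (u := z)]
  -- the three components are disjoint, as their distance relations contradict each other
  rcases hT.reachable_deleteEdges_pair x y z p with h | h | h
  · obtain ⟨h₁, h₂⟩ := hX h
    rw [if_pos h, if_neg fun h' => by grind, if_neg fun h' => by grind, h₂, h₁]
    push_cast; ring
  · obtain ⟨h₁, h₂⟩ := hY h
    rw [if_neg fun h' => by grind, if_pos h, if_neg fun h' => by grind, h₂, h₁]
    push_cast; ring
  · rw [if_neg fun h' => by grind, if_neg fun h' => by grind, if_pos h, hZx h, hZy h]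
    push_cast; ring

end ThreeComponents

end SimpleGraph

open SimpleGraph in
theorem stmt14 {V : Type*} [Fintype V] (T : SimpleGraph V) (hT : T.IsTree)
    (x y z : V) (hxy : x ≠ y) (hxz : T.Adj x z) (hyz : T.Adj y z) :
    (ww T x : ℤ) + ww T y - 2 * ww T z =
      2 * (((Finset.univ.filter
              (fun p => (T.deleteEdges {s(x,z), s(y,z)}).Reachable x p)).card : ℤ)
         + ((Finset.univ.filter
              (fun p => (T.deleteEdges {s(x,z), s(y,z)}).Reachable y p)).card : ℤ)
         + 2 * ((∑ p ∈ Finset.univ.filter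
              (fun p => (T.deleteEdges {s(x,z), s(y,z)}).Reachable z p),
              (T.dist z p + 1) : ℕ) : ℤ)) := by
  calc (ww T x : ℤ) + ww T y - 2 * ww T z
      = ∑ p, (((T.dist p x : ℤ) ^ 2 + T.dist p x) + ((T.dist p y : ℤ) ^ 2 + T.dist p y)
          - 2 * ((T.dist p z : ℤ) ^ 2 + T.dist p z)) := by
        push_cast [ww]
        rw [mul_sum, ← sum_add_distrib, ← sum_sub_distrib]
    _ = _ := sum_congr rfl fun p _ => hT.second_difference_dist_sq_add_dist hxy hxz hyz p
    _ = _ := by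
        simp only [sum_filter, card_filter, Nat.cast_sum, Nat.cast_ite, Nat.cast_one,
          Nat.cast_zero, mul_add, mul_sum, mul_ite, ← sum_add_distrib]
        refine sum_congr rfl fun p _ => ?_
        push_cast
        ring_nf
end

section
/- In any tree T, the set of vertices minimizing ww_T induces a connected subgraph. -/
open Finset
open scoped Classical

/-!
In a tree, each vertex `b` has at most one neighbour closer to a given `u`; every other
neighbour is farther by one. Since `d ↦ d² + d` is convex, `ww` is therefore convex along
every path: `2 ww(b) ≤ ww(a) + ww(c)` whenever `a - b - c` with `a ≠ c`. A function that is
convex along paths is bounded on a path by its values at the endpoints, so the path between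
two minimisers consists of minimisers.
-/

namespace SimpleGraph

variable {V : Type*} {G : SimpleGraph V}

def IsLocallyConvex {M : Type*} [Add M] [LE M] (G : SimpleGraph V) (w : V → M) : Prop :=
  ∀ ⦃a b c⦄, G.Adj a b → G.Adj b c → a ≠ c → w b + w b ≤ w a + w c

lemma IsAcyclic.eq_of_adj_of_dist_add_one_eq_s15 (hG : G.IsAcyclic) {u a b c : V}
    (hab : G.Adj a b) (hcb : G.Adj c b) (ha : G.dist u a + 1 = G.dist u b)
    (hc : G.dist u c + 1 = G.dist u b) : a = c := by
  have hub : G.Reachable u b := Reachable.of_dist_ne_zero (by omega)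
  obtain ⟨pa, hpa⟩ := (hub.trans hab.symm.reachable).exists_walk_length_eq_dist
  obtain ⟨pc, hpc⟩ := (hub.trans hcb.symm.reachable).exists_walk_length_eq_dist
  have hpa' : (pa.concat hab).IsPath :=
    Walk.isPath_of_length_eq_dist _ (by rw [Walk.length_concat, hpa, ha])
  have hpc' : (pc.concat hcb).IsPath :=
    Walk.isPath_of_length_eq_dist _ (by rw [Walk.length_concat, hpc, hc])
  have h := congrArg (fun p : G.Path u b ↦ p.1.penultimate)
    ((hG.subsingleton_path u b).elim ⟨_, hpa'⟩ ⟨_, hpc'⟩)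
  simpa only [Walk.penultimate_concat] using h

lemma IsTree.isLocallyConvex_ww [Fintype V] (hG : G.IsTree) : G.IsLocallyConvex (ww G) := by
  intro a b c hab hbc hac
  simp only [ww, ← sum_add_distrib]
  refine sum_le_sum fun u _ ↦ ?_
  rcases hG.dist_eq_dist_add_one_of_adj u hab with ha | ha <;>
    rcases hG.dist_eq_dist_add_one_of_adj u hbc with hc | hc
  · nlinarith
  · nlinarith
  · exact absurd (hG.isAcyclic.eq_of_adj_of_dist_add_one_eq_s15 hab hbc.symm ha.symm hc.symm) hac
  · nlinarith

section LocallyConvex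

variable {M : Type*} [AddCommMonoid M] [LinearOrder M] [IsOrderedCancelAddMonoid M]
  {w : V → M}

lemma IsLocallyConvex.le_of_isPath_cons (hw : G.IsLocallyConvex w) {a b y : V}
    (hab : G.Adj a b) (p : G.Walk b y) (hp : (p.cons hab).IsPath) (hle : w a ≤ w b) :
    w b ≤ w y := by
  induction p generalizing a with
  | nil => exact le_rfl
  | @cons b c y hbc q ih =>
    have hac : a ≠ c := fun h ↦ (Walk.cons_isPath_iff _ _).1 hp |>.2 (by simp [h])
    have hbc_le : w b ≤ w c :=
      le_of_add_le_add_left ((hw hab hbc hac).trans (add_le_add hle le_rfl))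
    exact hbc_le.trans (ih hbc ((Walk.cons_isPath_iff _ _).1 hp).1 hbc_le)

lemma IsLocallyConvex.le_max_of_mem_support (hw : G.IsLocallyConvex w) {x y z : V}
    {p : G.Walk x y} (hp : p.IsPath) (hz : z ∈ p.support) : w z ≤ max (w x) (w y) := by
  induction p with
  | nil => simp_all
  | @cons x b y hxb q ih =>
    rcases List.mem_cons.1 (Walk.support_cons hxb q ▸ hz) with rfl | hzq
    · exact le_max_left _ _
    have hb : w b ≤ max (w x) (w y) := by
      rcases le_total (w b) (w x) with hbx | hxb'
      · exact le_max_of_le_left hbx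
      · exact le_max_of_le_right (hw.le_of_isPath_cons hxb q hp hxb')
    exact (ih ((Walk.cons_isPath_iff _ _).1 hp).1 hzq).trans (max_le hb (le_max_right _ _))

lemma IsLocallyConvex.preconnected_induce_minimizers (hG : G.Preconnected)
    (hw : G.IsLocallyConvex w) : (G.induce {v | ∀ u, w v ≤ w u}).Preconnected := by
  rintro ⟨x, hx⟩ ⟨y, hy⟩
  obtain ⟨p, hp⟩ := (hG x y).exists_isPath
  have hsub : {v | v ∈ p.support} ⊆ {v | ∀ u, w v ≤ w u} := fun z hz u ↦
    (hw.le_max_of_mem_support hp hz).trans (max_le (hx u) (hy u))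
  exact (p.connected_induce_support.preconnected ⟨x, p.start_mem_support⟩
    ⟨y, p.end_mem_support⟩).map (induceHomOfLE G hsub).toHom

end LocallyConvex

end SimpleGraph

theorem stmt15 {V : Type*} [Fintype V] (T : SimpleGraph V) (hT : T.IsTree) :
    (T.induce {v | ∀ u, ww T v ≤ ww T u}).Connected := by
  have : Nonempty V := hT.connected.nonempty
  obtain ⟨v, hv⟩ := Finite.exists_min (ww T)
  rw [SimpleGraph.connected_iff]
  exact ⟨hT.isLocallyConvex_ww.preconnected_induce_minimizers hT.connected.preconnected,
    ⟨⟨v, hv⟩⟩⟩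
end
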